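/- For every n ≥ 0, the Hopf map p : S^{2n+1} → ℂPⁿ, which sends a unit vector v in ℂ^{n+1} to the complex line through v, is a locally trivial fiber bundle with fiber the circle group: every point of ℂPⁿ has an open neighborhood U together with a homeomorphism p⁻¹(U) ≅ U × S¹ commuting with the projections to U. -/

import Mathlib

/-- Complex projective `n`-space: the projectivization of `ℂ^{n+1}`. -/
noncomputable def CP (n : ℕ) : Type :=
  Projectivization ℂ (EuclideanSpace ℂ (Fin (n + 1)))

/-- The quotient topology on `ℂPⁿ`, coming from the topology on `ℂ^{n+1} \ {0}`. -/
noncomputable instance (n : ℕ) : TopologicalSpace (CP n) :=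
  inferInstanceAs (TopologicalSpace
    (Quotient (projectivizationSetoid ℂ (EuclideanSpace ℂ (Fin (n + 1))))))

/-- The odd-dimensional sphere `S^{2n+1}`: the unit sphere in `ℂ^{n+1}`. -/
noncomputable def oddSphere (n : ℕ) : Type :=
  Metric.sphere (0 : EuclideanSpace ℂ (Fin (n + 1))) 1

noncomputable instance (n : ℕ) : TopologicalSpace (oddSphere n) :=
  inferInstanceAs (TopologicalSpace (Metric.sphere (0 : EuclideanSpace ℂ (Fin (n + 1))) 1))

/-- The Hopf map `S^{2n+1} → ℂPⁿ`, sending a unit vector `v` of `ℂ^{n+1}` to the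
complex line through `v`; it is the restriction to the unit sphere of the canonical
projection `ℂ^{n+1} \ {0} → ℂPⁿ`. -/
noncomputable def hopfMap (n : ℕ) : oddSphere n → CP n := fun v =>
  let v' : Metric.sphere (0 : EuclideanSpace ℂ (Fin (n + 1))) 1 := v
  Projectivization.mk ℂ (v' : EuclideanSpace ℂ (Fin (n + 1)))
    (by
      intro h
      have hv := mem_sphere_zero_iff_norm.mp v'.2
      rw [h] at hv
      simp at hv)

/-! Over the affine chart `U_φ = {[w] | φ w ≠ 0}` of a continuous linear functional `φ`, the line
`[w]` has the canonical representative `(φ w)⁻¹ • w`, which depends continuously on `[w]`;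
normalising it gives a continuous unit section `s` with `φ ∘ s > 0`. Every unit vector `v` over
`U_φ` is then uniquely `u • s [v]` with `u = φ v / ‖φ v‖ ∈ S¹`, so `v ↦ ([v], φ v / ‖φ v‖)`
trivialises the Hopf map over `U_φ`. By Hahn–Banach these charts cover projective space. -/

noncomputable section

open Metric
open scoped LinearAlgebra.Projectivization

namespace Projectivization

instance instTopologicalSpace {K V : Type*} [DivisionRing K] [AddCommGroup V] [Module K V]
    [TopologicalSpace V] : TopologicalSpace (ℙ K V) :=
  inferInstanceAs (TopologicalSpace (Quotient (projectivizationSetoid K V)))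

theorem isQuotientMap_mk' {K V : Type*} [DivisionRing K] [AddCommGroup V] [Module K V]
    [TopologicalSpace V] : Topology.IsQuotientMap (mk' K : {v : V // v ≠ 0} → ℙ K V) :=
  isQuotientMap_quot_mk

section AffineChart

variable {𝕜 V : Type*} [NormedField 𝕜] [NormedAddCommGroup V] [NormedSpace 𝕜 V]
  (φ : StrongDual 𝕜 V)

def affineChart : Set (ℙ 𝕜 V) := {x | φ x.rep ≠ 0}

variable {φ}

theorem mk_mem_affineChart_iff {v : V} (hv : v ≠ 0) :
    mk 𝕜 v hv ∈ affineChart φ ↔ φ v ≠ 0 := by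
  obtain ⟨a, ha⟩ := exists_smul_eq_mk_rep 𝕜 v hv
  simp [affineChart, ← ha, Units.smul_def]

variable (φ)

theorem isOpen_affineChart : IsOpen (affineChart φ) := by
  refine isOpen_coinduced.mpr ?_
  have : Quotient.mk _ ⁻¹' affineChart φ = {v : {v : V // v ≠ 0} | φ v ≠ 0} :=
    Set.ext fun v => mk_mem_affineChart_iff v.2
  exact this ▸ isOpen_ne.preimage (φ.continuous.comp continuous_subtype_val)

/-- Off the chart this is the junk value `0`, since `0⁻¹ = 0`. -/
def chartRep : ℙ 𝕜 V → V :=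
  Projectivization.lift (fun v => (φ v)⁻¹ • (v : V)) fun v w t h => by
    have ht : t ≠ 0 := by rintro rfl; exact v.2 (by simpa using h)
    rw [h, map_smul, smul_smul, smul_eq_mul, mul_inv, mul_right_comm, inv_mul_cancel₀ ht, one_mul]

@[simp]
theorem chartRep_mk {v : V} (hv : v ≠ 0) : chartRep φ (mk 𝕜 v hv) = (φ v)⁻¹ • v := rfl

theorem continuousOn_chartRep : ContinuousOn (chartRep φ) (affineChart φ) := by
  rw [isQuotientMap_mk'.continuousOn_isOpen_iff (isOpen_affineChart φ)]
  intro v hv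
  have hv : φ v ≠ 0 := (mk_mem_affineChart_iff v.2).mp hv
  exact ((φ.continuous.continuousAt.comp continuous_subtype_val.continuousAt).inv₀ hv).smul
    continuous_subtype_val.continuousAt |>.continuousWithinAt

variable {φ}

theorem apply_chartRep {x : ℙ 𝕜 V} (hx : x ∈ affineChart φ) : φ (chartRep φ x) = 1 := by
  induction x using Projectivization.ind with
  | h v hv => simp [inv_mul_cancel₀ ((mk_mem_affineChart_iff hv).mp hx)]

theorem chartRep_ne_zero {x : ℙ 𝕜 V} (hx : x ∈ affineChart φ) : chartRep φ x ≠ 0 := fun h => by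
  simpa [h] using apply_chartRep hx

theorem mk_chartRep {x : ℙ 𝕜 V} (hx : x ∈ affineChart φ) :
    mk 𝕜 (chartRep φ x) (chartRep_ne_zero hx) = x := by
  induction x using Projectivization.ind with
  | h v hv =>
    exact (mk_eq_mk_iff' 𝕜 _ _ _ hv).mpr ⟨(φ v)⁻¹, rfl⟩

end AffineChart

theorem exists_mem_affineChart {𝕜 V : Type*} [RCLike 𝕜] [NormedAddCommGroup V] [NormedSpace 𝕜 V]
    (x : ℙ 𝕜 V) : ∃ φ : StrongDual 𝕜 V, x ∈ affineChart φ := by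
  obtain ⟨φ, -, hφ⟩ := exists_dual_vector 𝕜 x.rep (norm_ne_zero_iff.mpr x.rep_nonzero)
  exact ⟨φ, by simp [affineChart, hφ, x.rep_nonzero]⟩

end Projectivization

def Circle.ofDivNorm (z : ℂ) (hz : z ≠ 0) : Circle :=
  ⟨z / ‖z‖, mem_sphere_zero_iff_norm.mpr <| by simp [hz]⟩

theorem Circle.ofDivNorm_eq_of_eq_mul {z : ℂ} (hz : z ≠ 0) {u : Circle} {r : ℝ} (hr : 0 < r)
    (h : z = u * r) : Circle.ofDivNorm z hz = u := by
  ext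
  simp [Circle.ofDivNorm, h, Circle.norm_coe, abs_of_pos hr, hr.ne']

namespace Projectivization

variable {E : Type*} [NormedAddCommGroup E] [NormedSpace ℂ E] {φ : StrongDual ℂ E}

variable (E) in
def hopf (v : sphere (0 : E) 1) : ℙ ℂ E :=
  mk ℂ v (ne_zero_of_mem_unit_sphere v)

variable (E) in
theorem continuous_hopf : Continuous (hopf E) :=
  isQuotientMap_mk'.continuous.comp (continuous_subtype_val.subtype_mk _)

theorem hopf_mem_affineChart_iff {v : sphere (0 : E) 1} :
    hopf E v ∈ affineChart φ ↔ φ v ≠ 0 :=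
  mk_mem_affineChart_iff _

variable (φ) in
def unitRep (x : ℙ ℂ E) : E := (‖chartRep φ x‖⁻¹ : ℂ) • chartRep φ x

variable (φ) in
theorem continuousOn_unitRep : ContinuousOn (unitRep φ) (affineChart φ) :=
  have h := continuousOn_chartRep φ
  ((Complex.continuous_ofReal.comp_continuousOn h.norm).inv₀ fun _ hx => by
    simpa using chartRep_ne_zero hx).smul h

theorem norm_smul_unitRep (u : Circle) {x : ℙ ℂ E} (hx : x ∈ affineChart φ) :
    ‖(u : ℂ) • unitRep φ x‖ = 1 := by
  rw [norm_smul, Circle.norm_coe, one_mul]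
  exact norm_smul_inv_norm (chartRep_ne_zero hx)

theorem hopf_smul_unitRep (u : Circle) {x : ℙ ℂ E} (hx : x ∈ affineChart φ) :
    hopf E ⟨(u : ℂ) • unitRep φ x, mem_sphere_zero_iff_norm.mpr (norm_smul_unitRep u hx)⟩ = x :=
  ((mk_eq_mk_iff' ℂ _ _ _ _).mpr ⟨_, (smul_smul _ _ _).symm⟩).trans (mk_chartRep hx)

theorem apply_smul_unitRep (u : Circle) {x : ℙ ℂ E} (hx : x ∈ affineChart φ) :
    φ ((u : ℂ) • unitRep φ x) = u * (‖chartRep φ x‖⁻¹ : ℝ) := by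
  simp [unitRep, apply_chartRep hx]

theorem smul_unitRep_hopf {v : sphere (0 : E) 1} (hv : φ v ≠ 0) :
    (φ v / ‖φ v‖) • unitRep φ (hopf E v) = v := by
  have hnorm : ‖(v : E)‖ = 1 := mem_sphere_zero_iff_norm.mp v.2
  have hφ : (‖φ v‖ : ℂ) ≠ 0 := by simpa using hv
  simp only [unitRep, hopf, chartRep_mk, norm_smul, norm_inv, hnorm, smul_smul]
  conv_rhs => rw [← one_smul ℂ (v : E)]
  congr 1
  push_cast
  field_simp

variable (φ) in
def hopfTrivialization : hopf E ⁻¹' affineChart φ ≃ₜ affineChart φ × Circle where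
  toFun v := (⟨hopf E v, v.2⟩, Circle.ofDivNorm (φ v) (hopf_mem_affineChart_iff.mp v.2))
  invFun p := ⟨⟨(p.2 : ℂ) • unitRep φ p.1, mem_sphere_zero_iff_norm.mpr
    (norm_smul_unitRep p.2 p.1.2)⟩, by
    simpa only [Set.mem_preimage, hopf_smul_unitRep p.2 p.1.2] using p.1.2⟩
  left_inv v := Subtype.ext <| Subtype.ext <| smul_unitRep_hopf (hopf_mem_affineChart_iff.mp v.2)
  right_inv p := by
    refine Prod.ext (Subtype.ext (hopf_smul_unitRep p.2 p.1.2)) ?_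
    dsimp only
    exact Circle.ofDivNorm_eq_of_eq_mul _ (inv_pos.mpr (norm_pos_iff.mpr (chartRep_ne_zero p.1.2)))
      (apply_smul_unitRep p.2 p.1.2)
  continuous_toFun := by
    have hφ : Continuous fun v : hopf E ⁻¹' affineChart φ => φ v :=
      φ.continuous.comp (continuous_subtype_val.comp continuous_subtype_val)
    exact (((continuous_hopf E).comp continuous_subtype_val).subtype_mk _).prodMk
      ((hφ.div (Complex.continuous_ofReal.comp hφ.norm) fun v => Complex.ofReal_ne_zero.mpr
        (norm_ne_zero_iff.mpr (hopf_mem_affineChart_iff.mp v.2))).subtype_mk _)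
  continuous_invFun := by
    have hs := continuousOn_iff_continuous_domRestrict.mp (continuousOn_unitRep φ)
    refine Continuous.subtype_mk (Continuous.subtype_mk ?_ _) _
    exact (continuous_subtype_val.comp continuous_snd).smul (hs.comp continuous_fst)

theorem hopfTrivialization_apply_fst (v : hopf E ⁻¹' affineChart φ) :
    ((hopfTrivialization φ v).1 : ℙ ℂ E) = hopf E v := rfl

end Projectivization

end

/-- For every `n ≥ 0`, the Hopf map `p : S^{2n+1} → ℂPⁿ` is a locally trivial fiber
bundle with fiber the circle group `S¹`: it is continuous and every point of `ℂPⁿ`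
has an open neighborhood `U` together with a homeomorphism `p⁻¹(U) ≅ U × S¹`
commuting with the projections to `U`. -/
theorem hopfMap_isFiberBundle (n : ℕ) :
    Continuous (hopfMap n) ∧
    ∀ x : CP n, ∃ U : Set (CP n), IsOpen U ∧ x ∈ U ∧
      ∃ e : (hopfMap n ⁻¹' U) ≃ₜ (U × Circle),
        ∀ v : (hopfMap n ⁻¹' U), ((e v).1 : CP n) = hopfMap n (v : oddSphere n) := by
  refine ⟨Projectivization.continuous_hopf _, fun x => ?_⟩
  obtain ⟨φ, hx⟩ := Projectivization.exists_mem_affineChart x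
  exact ⟨_, Projectivization.isOpen_affineChart φ, hx, Projectivization.hopfTrivialization φ,
    Projectivization.hopfTrivialization_apply_fst⟩
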